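/- arXiv:2202.00603 — 5 statements merged into one kernel-verified Lean document; each statement's English description precedes it below -/
import Mathlib

section
/- Let 0 < α < 1, B(α) > 0, t₀ ∈ ℝ, let u : [t₀, ∞) → (0,∞) be continuously differentiable, let g : (0,∞) → ℝ be positive, differentiable, and strictly increasing, let u* > 0, and define Ψ(u) = u − u* − ∫_{u*}^{u} g(u*)/g(s) ds. Then for every t ≥ t₀, the Caputo–Fabrizio fractional derivative satisfies ᶜᶠD^α_{t₀}(Ψ∘u)(t) ≤ (1 − g(u*)/g(u(t))) · ᶜᶠD^α_{t₀}u(t). -/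
/-- The Caputo–Fabrizio fractional derivative of order `α` with base point `t₀`
and normalization constant `B`:
`ᶜᶠD^α_{t₀}f(t) = (B(2−α)/(2(1−α))) ∫_{t₀}^{t} f'(x) exp(−(α/(1−α))(t−x)) dx`. -/
noncomputable def cfDeriv (B α t₀ : ℝ) (f : ℝ → ℝ) (t : ℝ) : ℝ :=
  (B * (2 - α) / (2 * (1 - α))) * ∫ x in t₀..t,
    deriv f x * Real.exp (-(α / (1 - α)) * (t - x))

/-- The function `Ψ(u) = u − u* − ∫_{u*}^{u} g(u*)/g(s) ds`. -/
noncomputable def PsiFun (g : ℝ → ℝ) (ustar u : ℝ) : ℝ :=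
  u - ustar - ∫ s in ustar..u, g ustar / g s

/-!
Since `g` is positive and increasing, `Ψ' = 1 - g(u*)/g` is increasing, so `Ψ` is convex. For a
convex `Φ`, the Bregman gap `G(x) = Φ(u x) - Φ(u t) - Φ'(u t) (u x - u t)` is nonnegative and
vanishes at `x = t`, and `ᶜᶠD^α(Φ ∘ u)(t) - Φ'(u t) ᶜᶠD^α u(t)` is a positive multiple of
`∫_{t₀}^{t} G'(x) e^{-λ(t-x)} dx` with `λ = α/(1-α)`. Integrating by parts against the
increasing exponential kernel shows that this integral is
`-G(t₀) e^{-λ(t-t₀)} - λ ∫ G e^{-λ(t-x)} ≤ 0`.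
-/

open Set intervalIntegral

lemma ConvexOn.add_deriv_mul_sub_le {D : Set ℝ} {f : ℝ → ℝ} {f' x y : ℝ}
    (hf : ConvexOn ℝ D f) (hx : x ∈ D) (hy : y ∈ D) (hf' : HasDerivAt f f' y) :
    f y + f' * (x - y) ≤ f x := by
  rcases lt_trichotomy x y with hxy | rfl | hxy
  · have h := hf.slope_le_of_hasDerivAt hx hy hxy hf'
    rw [slope_def_field, div_le_iff₀ (sub_pos.2 hxy)] at h
    linarith
  · simp
  · have h := hf.le_slope_of_hasDerivAt hy hx hxy hf'
    rw [slope_def_field, le_div_iff₀ (sub_pos.2 hxy)] at h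
    linarith

lemma integral_deriv_mul_exp_nonpos {G G' : ℝ → ℝ} {a b l : ℝ} (hab : a ≤ b) (hl : 0 ≤ l)
    (hG : ContinuousOn G (Icc a b)) (hGd : ∀ x ∈ Ioo a b, HasDerivAt G (G' x) x)
    (hG' : IntervalIntegrable G' MeasureTheory.volume a b)
    (hG_nonneg : ∀ x ∈ Icc a b, 0 ≤ G x) (hGb : G b = 0) :
    ∫ x in a..b, G' x * Real.exp (-l * (b - x)) ≤ 0 := by
  have hEd (x : ℝ) :
      HasDerivAt (fun x => Real.exp (-l * (b - x))) (l * Real.exp (-l * (b - x))) x :=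
    (((hasDerivAt_id x).const_sub b).const_mul (-l)).exp.congr_deriv (by simp only [id]; ring)
  set E : ℝ → ℝ := fun x => Real.exp (-l * (b - x))
  have hE : Continuous E := by fun_prop
  have hint₁ : IntervalIntegrable (fun x => G' x * E x) MeasureTheory.volume a b :=
    hG'.mul_continuousOn hE.continuousOn
  have hint₂ : IntervalIntegrable (fun x => G x * (l * E x)) MeasureTheory.volume a b := by
    refine ContinuousOn.intervalIntegrable ?_
    rw [uIcc_of_le hab]
    exact hG.mul (by fun_prop)
  have hparts : ∫ x in a..b, (G' x * E x + G x * (l * E x)) = G b * E b - G a * E a :=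
    integral_eq_sub_of_hasDerivAt_of_le hab (hG.mul hE.continuousOn)
      (fun x hx => (hGd x hx).mul (hEd x)) (hint₁.add hint₂)
  have hrest : 0 ≤ ∫ x in a..b, G x * (l * E x) :=
    integral_nonneg hab fun x hx => mul_nonneg (hG_nonneg x hx) (by positivity)
  have hboundary : 0 ≤ G a * E a := mul_nonneg (hG_nonneg a ⟨le_rfl, hab⟩) (by positivity)
  rw [integral_add hint₁ hint₂, hGb, zero_mul] at hparts
  linarith

lemma cfDeriv_eq_of_hasDerivAt {B α t₀ t : ℝ} {f f' : ℝ → ℝ} (ht : t₀ ≤ t)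
    (hf : ∀ x ∈ Ioc t₀ t, HasDerivAt f (f' x) x) :
    cfDeriv B α t₀ f t = (B * (2 - α) / (2 * (1 - α))) *
      ∫ x in t₀..t, f' x * Real.exp (-(α / (1 - α)) * (t - x)) := by
  unfold cfDeriv
  congr 1
  refine integral_congr_ae (Filter.Eventually.of_forall fun x hx => ?_)
  rw [uIoc_of_le ht] at hx
  rw [(hf x hx).deriv]

lemma ConvexOn.integral_deriv_sub_mul_exp_nonpos {D : Set ℝ} {Φ Φ' u u' : ℝ → ℝ} {a b l : ℝ}
    (hab : a ≤ b) (hl : 0 ≤ l) (hΦ : ConvexOn ℝ D Φ) (hΦd : ∀ v ∈ D, HasDerivAt Φ (Φ' v) v)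
    (hΦ' : ContinuousOn Φ' D) (huD : MapsTo u (Icc a b) D) (hu : ContinuousOn u (Icc a b))
    (hud : ∀ x ∈ Ioo a b, HasDerivAt u (u' x) x) (hu' : ContinuousOn u' (Icc a b)) :
    ∫ x in a..b, (Φ' (u x) - Φ' (u b)) * u' x * Real.exp (-l * (b - x)) ≤ 0 := by
  have hbD : u b ∈ D := huD ⟨hab, le_rfl⟩
  set G : ℝ → ℝ := fun x => Φ (u x) - Φ (u b) - Φ' (u b) * (u x - u b)
  have hGc : ContinuousOn G (Icc a b) := by
    have hΦc : ContinuousOn Φ D := fun v hv => (hΦd v hv).continuousAt.continuousWithinAt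
    exact ((hΦc.comp hu huD).sub continuousOn_const).sub
      (continuousOn_const.mul (hu.sub continuousOn_const))
  have hGd (x : ℝ) (hx : x ∈ Ioo a b) : HasDerivAt G ((Φ' (u x) - Φ' (u b)) * u' x) x :=
    ((((hΦd _ (huD (Ioo_subset_Icc_self hx))).comp x (hud x hx)).sub_const (Φ (u b))).sub
      (((hud x hx).sub_const (u b)).const_mul (Φ' (u b)))).congr_deriv (by ring)
  have hG_nonneg (x : ℝ) (hx : x ∈ Icc a b) : 0 ≤ G x := by
    have := hΦ.add_deriv_mul_sub_le (huD hx) hbD (hΦd _ hbD)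
    simp only [G]
    linarith
  exact integral_deriv_mul_exp_nonpos hab hl hGc hGd
    ((((hΦ'.comp hu huD).sub continuousOn_const).mul hu').intervalIntegrable_of_Icc hab)
    hG_nonneg (by simp only [G, sub_self, mul_zero])

theorem cfDeriv_comp_le_of_convexOn {B α t₀ t : ℝ} (hB : 0 ≤ B) (hα : 0 ≤ α) (hα1 : α < 1)
    {Φ Φ' u : ℝ → ℝ} {D : Set ℝ} (hΦ : ConvexOn ℝ D Φ) (hΦd : ∀ v ∈ D, HasDerivAt Φ (Φ' v) v)
    (hΦ' : ContinuousOn Φ' D) (hu : ContDiffOn ℝ 1 u (Ici t₀)) (huD : MapsTo u (Ici t₀) D)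
    (ht : t₀ ≤ t) :
    cfDeriv B α t₀ (fun x => Φ (u x)) t ≤ Φ' (u t) * cfDeriv B α t₀ u t := by
  set u' := derivWithin u (Ici t₀)
  set E : ℝ → ℝ := fun x => Real.exp (-(α / (1 - α)) * (t - x))
  have hK : 0 ≤ B * (2 - α) / (2 * (1 - α)) :=
    div_nonneg (mul_nonneg hB (by linarith)) (by linarith)
  have hIcc : MapsTo u (Icc t₀ t) D := fun x hx => huD hx.1
  have huc : ContinuousOn u (Icc t₀ t) := hu.continuousOn.mono Icc_subset_Ici_self
  have hu'c : ContinuousOn u' (Icc t₀ t) :=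
    (hu.continuousOn_derivWithin (uniqueDiffOn_Ici t₀) le_rfl).mono Icc_subset_Ici_self
  have hud (x : ℝ) (hx : t₀ < x) : HasDerivAt u (u' x) x :=
    (hu.differentiableOn one_ne_zero x hx.le).hasDerivWithinAt.hasDerivAt (Ici_mem_nhds hx)
  have hE : ContinuousOn E (Icc t₀ t) := by fun_prop
  have hgap : ∫ x in t₀..t, (Φ' (u x) - Φ' (u t)) * u' x * E x ≤ 0 :=
    hΦ.integral_deriv_sub_mul_exp_nonpos ht (div_nonneg hα (by linarith)) hΦd hΦ' hIcc huc
      (fun x hx => hud x hx.1) hu'c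
  have hsplit : ∫ x in t₀..t, (Φ' (u x) - Φ' (u t)) * u' x * E x
      = (∫ x in t₀..t, Φ' (u x) * u' x * E x) - Φ' (u t) * ∫ x in t₀..t, u' x * E x := by
    have hI₁ : IntervalIntegrable (fun x => Φ' (u x) * u' x * E x) MeasureTheory.volume t₀ t :=
      (((hΦ'.comp huc hIcc).mul hu'c).mul hE).intervalIntegrable_of_Icc ht
    have hI₂ : IntervalIntegrable (fun x => Φ' (u t) * (u' x * E x)) MeasureTheory.volume t₀ t :=
      (continuousOn_const.mul (hu'c.mul hE)).intervalIntegrable_of_Icc ht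
    rw [← integral_const_mul, ← integral_sub hI₁ hI₂]
    congr 1 with x
    ring
  rw [cfDeriv_eq_of_hasDerivAt (f := fun x => Φ (u x)) ht
      fun x hx => (hΦd _ (huD hx.1.le)).comp x (hud x hx.1),
    cfDeriv_eq_of_hasDerivAt ht fun x hx => hud x hx.1]
  change _ * ∫ x in t₀..t, Φ' (u x) * u' x * E x ≤ Φ' (u t) * (_ * ∫ x in t₀..t, u' x * E x)
  linarith [mul_nonpos_of_nonneg_of_nonpos hK (hsplit ▸ hgap)]

lemma hasDerivAt_psiFun {g : ℝ → ℝ} {ustar v : ℝ} (hg : ContinuousOn g (Ioi 0))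
    (hg_pos : ∀ s ∈ Ioi (0 : ℝ), 0 < g s) (hustar : 0 < ustar) (hv : 0 < v) :
    HasDerivAt (PsiFun g ustar) (1 - g ustar / g v) v := by
  have hc : ContinuousOn (fun s => g ustar / g s) (Ioi 0) :=
    continuousOn_const.div hg fun s hs => (hg_pos s hs).ne'
  have hint : IntervalIntegrable (fun s => g ustar / g s) MeasureTheory.volume ustar v :=
    (hc.mono fun x hx => lt_of_lt_of_le (lt_min hustar hv) hx.1).intervalIntegrable
  exact ((hasDerivAt_id v).sub_const ustar).sub (integral_hasDerivAt_right hint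
    (hc.stronglyMeasurableAtFilter isOpen_Ioi v hv) (hc.continuousAt (Ioi_mem_nhds hv)))

lemma convexOn_psiFun {g : ℝ → ℝ} {ustar : ℝ} (hg : ContinuousOn g (Ioi 0))
    (hg_pos : ∀ s ∈ Ioi (0 : ℝ), 0 < g s) (hg_mono : MonotoneOn g (Ioi 0)) (hustar : 0 < ustar) :
    ConvexOn ℝ (Ioi 0) (PsiFun g ustar) := by
  have hd (v : ℝ) (hv : v ∈ Ioi (0 : ℝ)) := hasDerivAt_psiFun hg hg_pos hustar hv
  refine MonotoneOn.convexOn_of_deriv (convex_Ioi 0)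
    (fun v hv => (hd v hv).continuousAt.continuousWithinAt)
    (fun v hv => (hd v (interior_subset hv)).differentiableAt.differentiableWithinAt) ?_
  rw [interior_Ioi]
  intro v hv w hw hvw
  rw [(hd v hv).deriv, (hd w hw).deriv]
  gcongr
  exacts [(hg_pos ustar hustar).le, hg_pos v hv, hg_mono hv hw hvw]

/-- For `0 < α < 1`, `B(α) > 0`, a positive continuously differentiable function `u` on
`[t₀,∞)`, and `g` positive, differentiable and strictly increasing on `(0,∞)`, `u* > 0`,
the Caputo–Fabrizio fractional derivative satisfies
`ᶜᶠD^α_{t₀}(Ψ∘u)(t) ≤ (1 − g(u*)/g(u(t))) ᶜᶠD^α_{t₀}u(t)` for all `t ≥ t₀`. -/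
theorem cf_psi_estimate (α B t₀ : ℝ) (hα : 0 < α) (hα1 : α < 1) (hB : 0 < B)
    (u : ℝ → ℝ) (hu_pos : ∀ x ∈ Set.Ici t₀, 0 < u x)
    (hu : ContDiffOn ℝ 1 u (Set.Ici t₀))
    (g : ℝ → ℝ)
    (hg_pos : ∀ s ∈ Set.Ioi (0 : ℝ), 0 < g s)
    (hg_diff : DifferentiableOn ℝ g (Set.Ioi 0))
    (hg_mono : StrictMonoOn g (Set.Ioi 0))
    (ustar : ℝ) (hustar : 0 < ustar) :
    ∀ t : ℝ, t₀ ≤ t →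
      cfDeriv B α t₀ (fun x => PsiFun g ustar (u x)) t ≤
        (1 - g ustar / g (u t)) * cfDeriv B α t₀ u t := by
  intro t ht
  have hg := hg_diff.continuousOn
  exact cfDeriv_comp_le_of_convexOn hB.le hα.le hα1
    (convexOn_psiFun hg hg_pos hg_mono.monotoneOn hustar)
    (fun v hv => hasDerivAt_psiFun hg hg_pos hustar hv)
    (continuousOn_const.sub (continuousOn_const.div hg fun s hs => (hg_pos s hs).ne'))
    hu hu_pos ht
end

section
/- Let 0 < α < 1, t₀ ∈ ℝ, let u : [t₀, ∞) → (0,∞) be continuously differentiable, and let u* > 0. Then for every t ≥ t₀, the Caputo fractional derivative of the Volterra-type function satisfies ᶜD^α_{t₀}[ u(·) − u* − u* ln(u(·)/u*) ](t) ≤ (1 − u*/u(t)) · ᶜD^α_{t₀}u(t). -/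
/-- The Caputo fractional derivative of order `α` with base point `t₀`:
`ᶜD^α_{t₀}f(t) = (1/Γ(1−α)) ∫_{t₀}^{t} f'(x) (t−x)^{−α} dx`. -/
noncomputable def caputoDeriv (α t₀ : ℝ) (f : ℝ → ℝ) (t : ℝ) : ℝ :=
  (1 / Real.Gamma (1 - α)) * ∫ x in t₀..t, deriv f x * (t - x) ^ (-α)

/-!
With `volterra c y = y - c - c log (y / c)` we have `(volterra c ∘ u)' = (1 - c / u) u'`. Splitting
`1 - u* / u = (1 - u* / u(t)) + (u* / u(t)) (1 - u(t) / u)`, the difference of the two sides is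
`u* / u(t)` times the Caputo integral of `h = volterra (u t) ∘ u`, a nonnegative function vanishing
at `t`. Integrating that integral by parts against `(t - x)^(-α)`, the boundary term at `t`
vanishes because `h = O(t - x)`, and the remaining terms are `≤ 0` since `h ≥ 0` and the kernel
increases.
-/

open Set Filter Topology Asymptotics intervalIntegral MeasureTheory

noncomputable def volterra (c y : ℝ) : ℝ := y - c - c * Real.log (y / c)

@[simp]
theorem volterra_self (c : ℝ) : volterra c c = 0 := by
  by_cases hc : c = 0 <;> simp [volterra, hc]

theorem volterra_nonneg {c y : ℝ} (hc : 0 < c) (hy : 0 < y) : 0 ≤ volterra c y := by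
  have := mul_le_mul_of_nonneg_left (Real.log_le_sub_one_of_pos (div_pos hy hc)) hc.le
  rw [mul_sub, mul_div_cancel₀ _ hc.ne', mul_one] at this
  unfold volterra
  linarith

theorem hasDerivAt_volterra {c y : ℝ} (hc : c ≠ 0) (hy : y ≠ 0) :
    HasDerivAt (volterra c) (1 - c / y) y := by
  have hlog := ((hasDerivAt_id' y).div_const c).log (div_ne_zero hy hc)
  exact (((hasDerivAt_id' y).sub_const c).sub (hlog.const_mul c)).congr_deriv (by field_simp)

theorem intervalIntegrable_mul_sub_rpow_neg {α t a b : ℝ} {w : ℝ → ℝ} (hα : α < 1)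
    (hw : ContinuousOn w (uIcc a b)) :
    IntervalIntegrable (fun x => w x * (t - x) ^ (-α)) volume a b := by
  have hkernel : IntervalIntegrable (fun y : ℝ => y ^ (-α)) volume (t - a) (t - b) :=
    intervalIntegrable_rpow' (by linarith)
  have := hkernel.comp_sub_left t
  simp only [sub_sub_cancel] at this
  exact this.continuousOn_mul hw

theorem HasDerivWithinAt.tendsto_sub_mul_sub_rpow_neg {α b h' : ℝ} {h : ℝ → ℝ} {s : Set ℝ}
    (hh : HasDerivWithinAt h h' s b) (hs : s ⊆ Iic b) (hα : α < 1) :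
    Tendsto (fun x => (h x - h b) * (b - x) ^ (-α)) (𝓝[s] b) (𝓝 0) := by
  have hO : (fun x => (h x - h b) * (b - x) ^ (-α)) =O[𝓝[s] b]
      fun x => (x - b) * (b - x) ^ (-α) :=
    (HasFDerivWithinAt.isBigO_sub hh).mul (isBigO_refl _ _)
  refine hO.trans_tendsto ?_
  have hpow : ∀ x ∈ s, (x - b) * (b - x) ^ (-α) = -(b - x) ^ (1 - α) := fun x hx => by
    rw [sub_eq_add_neg 1, Real.rpow_add' (sub_nonneg.2 (hs hx)) (by linarith), Real.rpow_one]
    ring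
  have hcont : Tendsto (fun x : ℝ => -(b - x) ^ (1 - α)) (𝓝 b) (𝓝 (-(b - b) ^ (1 - α))) :=
    ((continuous_const.sub continuous_id).rpow_const fun _ => Or.inr (by linarith)).neg.tendsto b
  rw [sub_self, Real.zero_rpow (by linarith), neg_zero] at hcont
  exact (tendsto_nhdsWithin_of_tendsto_nhds hcont).congr' (eventually_nhdsWithin_of_forall
    fun x hx => (hpow x hx).symm)

theorem integral_mul_sub_rpow_neg_nonpos_of_isMinOn {α a b : ℝ} {h w : ℝ → ℝ}
    (hα : 0 < α) (hα1 : α < 1) (hab : a ≤ b)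
    (hh : ∀ x ∈ Icc a b, HasDerivWithinAt h (w x) (Icc a b) x) (hw : ContinuousOn w (Icc a b))
    (hmin : IsMinOn h (Icc a b) b) :
    ∫ x in a..b, w x * (b - x) ^ (-α) ≤ 0 := by
  set F : ℝ → ℝ := fun x => (h x - h b) * (b - x) ^ (-α)
  have hF_cont : ContinuousOn F (Icc a b) := by
    intro x hx
    rcases hx.2.lt_or_eq with hxb | rfl
    · exact ((hh x hx).continuousWithinAt.sub continuousWithinAt_const).mul
        ((continuousAt_const.sub continuousAt_id).rpow_const
          (Or.inl (sub_ne_zero.2 hxb.ne'))).continuousWithinAt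
    · have := (hh x hx).tendsto_sub_mul_sub_rpow_neg Icc_subset_Iic_self hα1
      simpa [ContinuousWithinAt, F] using this
  have hF_deriv : ∀ x ∈ Ioo a b, HasDerivWithinAt F
      (w x * (b - x) ^ (-α) + (h x - h b) * (α * (b - x) ^ (-α - 1))) (Ioi x) x := by
    intro x hx
    have hhx : HasDerivAt h (w x) x :=
      (hh x (Ioo_subset_Icc_self hx)).hasDerivAt (Icc_mem_nhds hx.1 hx.2)
    have hker : HasDerivAt (fun x => (b - x) ^ (-α)) (-α * (b - x) ^ (-α - 1) * -1) x :=
      (Real.hasDerivAt_rpow_const (Or.inl (sub_ne_zero.2 hx.2.ne'))).comp x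
        ((hasDerivAt_id x).const_sub b)
    exact ((hhx.sub_const (h b)).mul hker).hasDerivWithinAt.congr_deriv (by ring)
  have hint : IntegrableOn (fun x => w x * (b - x) ^ (-α)) (Icc a b) :=
    (intervalIntegrable_iff_integrableOn_Icc_of_le hab).1
      (intervalIntegrable_mul_sub_rpow_neg hα1 (by rwa [uIcc_of_le hab]))
  have hle := integral_le_sub_of_hasDeriv_right_of_le hab hF_cont hF_deriv hint fun x hx =>
    le_add_of_nonneg_right (mul_nonneg (sub_nonneg.2 (hmin (Ioo_subset_Icc_self hx)))
      (mul_nonneg hα.le (Real.rpow_nonneg (sub_nonneg.2 hx.2.le) _)))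
  calc ∫ x in a..b, w x * (b - x) ^ (-α) ≤ F b - F a := hle
    _ = -((h a - h b) * (b - a) ^ (-α)) := by simp [F]
    _ ≤ 0 := neg_nonpos.2 (mul_nonneg (sub_nonneg.2 (hmin (left_mem_Icc.2 hab)))
        (Real.rpow_nonneg (sub_nonneg.2 hab) _))

theorem caputoDeriv_eq_integral_of_hasDerivAt {α t₀ t : ℝ} {f f' : ℝ → ℝ} (ht : t₀ ≤ t)
    (hf : ∀ x ∈ Ioo t₀ t, HasDerivAt f (f' x) x) :
    caputoDeriv α t₀ f t = 1 / Real.Gamma (1 - α) * ∫ x in t₀..t, f' x * (t - x) ^ (-α) := by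
  rw [caputoDeriv, integral_of_le ht, integral_of_le ht, integral_Ioc_eq_integral_Ioo,
    integral_Ioc_eq_integral_Ioo]
  congr 1
  exact setIntegral_congr_fun measurableSet_Ioo fun x hx => by rw [(hf x hx).deriv]

theorem integral_deriv_volterra_comp_mul_sub_rpow_neg_le {α a b c : ℝ} {u g : ℝ → ℝ}
    (hα : 0 < α) (hα1 : α < 1) (hab : a ≤ b) (hc : 0 ≤ c)
    (hu : ∀ x ∈ Icc a b, HasDerivWithinAt u (g x) (Icc a b) x) (hg : ContinuousOn g (Icc a b))
    (hu_pos : ∀ x ∈ Icc a b, 0 < u x) :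
    ∫ x in a..b, (1 - c / u x) * g x * (b - x) ^ (-α) ≤
      (1 - c / u b) * ∫ x in a..b, g x * (b - x) ^ (-α) := by
  have hb : b ∈ Icc a b := right_mem_Icc.2 hab
  have hw : ContinuousOn (fun x => (1 - u b / u x) * g x) (Icc a b) :=
    (continuousOn_const.sub (continuousOn_const.div (fun x hx => (hu x hx).continuousWithinAt)
      fun x hx => (hu_pos x hx).ne')).mul hg
  have hint : ∀ {w : ℝ → ℝ}, ContinuousOn w (Icc a b) →
      IntervalIntegrable (fun x => w x * (b - x) ^ (-α)) volume a b := fun hw =>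
    intervalIntegrable_mul_sub_rpow_neg hα1 (by rwa [uIcc_of_le hab])
  have hsplit : ∫ x in a..b, (1 - c / u x) * g x * (b - x) ^ (-α) =
      (1 - c / u b) * (∫ x in a..b, g x * (b - x) ^ (-α)) +
        c / u b * ∫ x in a..b, (1 - u b / u x) * g x * (b - x) ^ (-α) := by
    rw [← intervalIntegral.integral_const_mul, ← intervalIntegral.integral_const_mul,
      ← intervalIntegral.integral_add ((hint hg).const_mul _) ((hint hw).const_mul _)]
    refine integral_congr fun x hx => ?_
    rw [uIcc_of_le hab] at hx
    have := (hu_pos x hx).ne'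
    have := (hu_pos b hb).ne'
    field_simp
    ring
  have hmin : ∫ x in a..b, (1 - u b / u x) * g x * (b - x) ^ (-α) ≤ 0 :=
    integral_mul_sub_rpow_neg_nonpos_of_isMinOn (h := fun x => volterra (u b) (u x)) hα hα1 hab
      (fun x hx => (hasDerivAt_volterra (hu_pos b hb).ne' (hu_pos x hx).ne').comp_hasDerivWithinAt
        x (hu x hx))
      hw fun x hx => by simpa using volterra_nonneg (hu_pos b hb) (hu_pos x hx)
  rw [hsplit]
  linarith [mul_nonpos_of_nonneg_of_nonpos (div_nonneg hc (hu_pos b hb).le) hmin]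

/-- For `0 < α < 1`, a positive continuously differentiable function `u` on `[t₀,∞)` and
`u* > 0`, the Caputo fractional derivative of the Volterra-type function satisfies
`ᶜD^α_{t₀}[u − u* − u* ln(u/u*)](t) ≤ (1 − u*/u(t)) ᶜD^α_{t₀}u(t)` for all `t ≥ t₀`. -/
theorem caputo_volterra_estimate (α t₀ : ℝ) (hα : 0 < α) (hα1 : α < 1)
    (u : ℝ → ℝ) (hu_pos : ∀ x ∈ Set.Ici t₀, 0 < u x)
    (hu : ContDiffOn ℝ 1 u (Set.Ici t₀))
    (ustar : ℝ) (hustar : 0 < ustar) :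
    ∀ t : ℝ, t₀ ≤ t →
      caputoDeriv α t₀ (fun x => u x - ustar - ustar * Real.log (u x / ustar)) t ≤
        (1 - ustar / u t) * caputoDeriv α t₀ u t := by
  intro t ht
  set g := derivWithin u (Ici t₀)
  have hu_Icc : ∀ x ∈ Icc t₀ t, HasDerivWithinAt u (g x) (Icc t₀ t) x := fun x hx =>
    ((hu.differentiableOn one_ne_zero x hx.1).hasDerivWithinAt).mono Icc_subset_Ici_self
  have hu_Ioo : ∀ x ∈ Ioo t₀ t, HasDerivAt u (g x) x := fun x hx =>
    (hu_Icc x (Ioo_subset_Icc_self hx)).hasDerivAt (Icc_mem_nhds hx.1 hx.2)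
  have hV : ∀ x ∈ Ioo t₀ t, HasDerivAt (fun x => u x - ustar - ustar * Real.log (u x / ustar))
      ((1 - ustar / u x) * g x) x := fun x hx =>
    (hasDerivAt_volterra hustar.ne' (hu_pos x hx.1.le).ne').comp x (hu_Ioo x hx)
  have hg : ContinuousOn g (Icc t₀ t) :=
    (hu.continuousOn_derivWithin (uniqueDiffOn_Ici t₀) le_rfl).mono Icc_subset_Ici_self
  have hΓ : 0 ≤ 1 / Real.Gamma (1 - α) :=
    one_div_nonneg.2 (Real.Gamma_pos_of_pos (by linarith)).le
  rw [caputoDeriv_eq_integral_of_hasDerivAt ht hV, caputoDeriv_eq_integral_of_hasDerivAt ht hu_Ioo,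
    mul_left_comm]
  exact mul_le_mul_of_nonneg_left (integral_deriv_volterra_comp_mul_sub_rpow_neg_le hα hα1 ht
    hustar.le hu_Icc hg fun x hx => hu_pos x hx.1) hΓ
end

section
/- Let 0 < α < 1, t₀ ∈ ℝ, and let u : [t₀, ∞) → ℝ be continuously differentiable. Then for every t ≥ t₀, the Caputo fractional derivative satisfies ᶜD^α_{t₀}(u²)(t) ≤ 2 u(t) · ᶜD^α_{t₀}u(t). -/
open Set MeasureTheory intervalIntegral Filter Topology

theorem ContDiffOn.exists_lipschitzOnWith_Icc {g : ℝ → ℝ} {a b : ℝ} (hab : a < b)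
    (hg : ContDiffOn ℝ 1 g (Icc a b)) : ∃ K, LipschitzOnWith K g (Icc a b) := by
  obtain ⟨C, hC⟩ := isCompact_Icc.exists_bound_of_continuousOn
    (hg.continuousOn_derivWithin (uniqueDiffOn_Icc hab) le_rfl)
  refine ⟨C.toNNReal, (convex_Icc a b).lipschitzOnWith_of_nnnorm_derivWithin_le
    (hg.differentiableOn one_ne_zero) fun x hx => ?_⟩
  rw [← NNReal.coe_le_coe, coe_nnnorm, Real.coe_toNNReal']
  exact (hC x hx).trans (le_max_left _ _)

theorem hasDerivAt_sub_rpow_neg {t x : ℝ} (α : ℝ) (hx : x < t) :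
    HasDerivAt (fun y => (t - y) ^ (-α)) (α * (t - x) ^ (-α - 1)) x := by
  convert ((hasDerivAt_id' x).const_sub t).rpow_const (p := -α) (Or.inl (sub_pos.2 hx).ne') using 1
  ring

theorem intervalIntegrable_mul_sub_rpow {φ : ℝ → ℝ} {α a b : ℝ} (hα : α < 1) (hab : a ≤ b)
    (hφ : ContinuousOn φ (Icc a b)) :
    IntervalIntegrable (fun x => φ x * (b - x) ^ (-α)) volume a b := by
  have hw : IntervalIntegrable (fun x => (b - x) ^ (-α)) volume a b := by
    simpa using (intervalIntegrable_rpow' (a := b - a) (b := 0) (r := -α)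
      (by linarith)).comp_sub_left b
  exact hw.continuousOn_mul (by rwa [uIcc_of_le hab])

theorem integral_deriv_mul_le_of_nonneg {g g' w w' : ℝ → ℝ} {a b : ℝ} (hab : a ≤ b)
    (hg : ContinuousOn g (Icc a b)) (hw : ContinuousOn w (Icc a b))
    (hgd : ∀ x ∈ Ioo a b, HasDerivAt g (g' x) x) (hwd : ∀ x ∈ Ioo a b, HasDerivAt w (w' x) x)
    (hg' : IntervalIntegrable g' volume a b) (hw' : ContinuousOn w' (Icc a b))
    (hg0 : ∀ x ∈ Icc a b, 0 ≤ g x) (hwa : 0 ≤ w a) (hw'0 : ∀ x ∈ Icc a b, 0 ≤ w' x) :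
    ∫ x in a..b, g' x * w x ≤ g b * w b := by
  rw [← uIcc_of_le hab] at hg hw hw'
  have hparts := integral_deriv_mul_eq_sub_of_hasDerivAt hg hw
    (by rwa [min_eq_left hab, max_eq_right hab]) (by rwa [min_eq_left hab, max_eq_right hab])
    hg' hw'.intervalIntegrable
  have hgw' : IntervalIntegrable (fun x => g x * w' x) volume a b := (hg.mul hw').intervalIntegrable
  rw [integral_add (hg'.mul_continuousOn hw) hgw'] at hparts
  have hrest : 0 ≤ ∫ x in a..b, g x * w' x :=
    integral_nonneg hab fun x hx => mul_nonneg (hg0 x hx) (hw'0 x hx)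
  linarith [mul_nonneg (hg0 a ⟨le_rfl, hab⟩) hwa]

theorem caputoDeriv_eq_integral_derivWithin {α t₀ t : ℝ} (f : ℝ → ℝ) (ht : t₀ ≤ t) :
    caputoDeriv α t₀ f t =
      1 / Real.Gamma (1 - α) * ∫ x in t₀..t, derivWithin f (Icc t₀ t) x * (t - x) ^ (-α) := by
  simp only [caputoDeriv, integral_of_le ht, integral_Ioc_eq_integral_Ioo]
  congr 1
  refine setIntegral_congr_fun measurableSet_Ioo fun x hx => ?_
  rw [derivWithin_of_mem_nhds (Icc_mem_nhds hx.1 hx.2)]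

theorem integral_deriv_mul_sub_rpow_le {g g' : ℝ → ℝ} {α a s t m : ℝ} (hα : 0 ≤ α)
    (has : a ≤ s) (hst : s < t) (hg : ContinuousOn g (Icc a s))
    (hgd : ∀ x ∈ Ioo a s, HasDerivAt g (g' x) x) (hg' : IntervalIntegrable g' volume a s)
    (hm : ∀ x ∈ Icc a s, m ≤ g x) :
    ∫ x in a..s, g' x * (t - x) ^ (-α) ≤ (g s - m) * (t - s) ^ (-α) := by
  have hlt : ∀ x ∈ Icc a s, x < t := fun x hx => hx.2.trans_lt hst
  refine integral_deriv_mul_le_of_nonneg has (hg.sub continuousOn_const)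
    (fun x hx => (hasDerivAt_sub_rpow_neg α (hlt x hx)).continuousAt.continuousWithinAt)
    (fun x hx => (hgd x hx).sub_const m)
    (fun x hx => hasDerivAt_sub_rpow_neg α (hlt x (Ioo_subset_Icc_self hx))) hg'
    (fun x hx => (continuousAt_const.mul ((continuousAt_const.sub continuousAt_id).rpow_const
      (Or.inl (sub_pos.2 (hlt x hx)).ne'))).continuousWithinAt)
    (fun x hx => sub_nonneg.2 (hm x hx)) (Real.rpow_nonneg (sub_pos.2 (hlt a ⟨le_rfl, has⟩)).le _)
    (fun x hx => mul_nonneg hα (Real.rpow_nonneg (sub_pos.2 (hlt x hx)).le _))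

theorem exists_integral_derivWithin_mul_sub_rpow_le_of_isMinOn {α t₀ t : ℝ} {g : ℝ → ℝ}
    (hα : 0 ≤ α) (ht : t₀ < t) (hg : ContDiffOn ℝ 1 g (Icc t₀ t))
    (hmin : IsMinOn g (Icc t₀ t) t) :
    ∃ K : ℝ, ∀ s ∈ Ioo t₀ t,
      ∫ x in t₀..s, derivWithin g (Icc t₀ t) x * (t - x) ^ (-α) ≤ K * (t - s) ^ (1 - α) := by
  obtain ⟨K, hK⟩ := hg.exists_lipschitzOnWith_Icc ht
  refine ⟨K, fun s ⟨hs₀, hst⟩ => ?_⟩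
  have hIcc : Icc t₀ s ⊆ Icc t₀ t := Icc_subset_Icc_right hst.le
  have hts : 0 < t - s := sub_pos.2 hst
  have hg'c : ContinuousOn (derivWithin g (Icc t₀ t)) (Icc t₀ s) :=
    (hg.continuousOn_derivWithin (uniqueDiffOn_Icc ht) le_rfl).mono hIcc
  have hgd : ∀ x ∈ Ioo t₀ s, HasDerivAt g (derivWithin g (Icc t₀ t) x) x := fun x hx => by
    have hnhds := Icc_mem_nhds hx.1 (hx.2.trans hst)
    simpa only [derivWithin_of_mem_nhds hnhds] using
      (hg.differentiableOn one_ne_zero).hasDerivAt hnhds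
  have hlip : g s - g t ≤ K * (t - s) := by
    have := hK.dist_le_mul s (hIcc ⟨hs₀.le, le_rfl⟩) t ⟨ht.le, le_rfl⟩
    rw [Real.dist_eq, Real.dist_eq, abs_sub_comm s, abs_of_pos hts] at this
    exact (le_abs_self _).trans this
  calc ∫ x in t₀..s, derivWithin g (Icc t₀ t) x * (t - x) ^ (-α)
      ≤ (g s - g t) * (t - s) ^ (-α) :=
        integral_deriv_mul_sub_rpow_le hα hs₀.le hst (hg.continuousOn.mono hIcc) hgd
          (hg'c.intervalIntegrable_of_Icc hs₀.le) fun x hx => hmin (hIcc hx)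
    _ ≤ K * (t - s) * (t - s) ^ (-α) := by gcongr
    _ = K * (t - s) ^ (1 - α) := by
        rw [show (1 : ℝ) - α = 1 + -α by ring, Real.rpow_add hts, Real.rpow_one, mul_assoc]

theorem caputoDeriv_nonpos_of_isMinOn {α t₀ t : ℝ} {g : ℝ → ℝ} (hα0 : 0 ≤ α) (hα1 : α < 1)
    (ht : t₀ < t) (hg : ContDiffOn ℝ 1 g (Icc t₀ t)) (hmin : IsMinOn g (Icc t₀ t) t) :
    caputoDeriv α t₀ g t ≤ 0 := by
  have hΓ : 0 < Real.Gamma (1 - α) := Real.Gamma_pos_of_pos (sub_pos.2 hα1)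
  rw [caputoDeriv_eq_integral_derivWithin g ht.le]
  refine mul_nonpos_of_nonneg_of_nonpos (by positivity) ?_
  obtain ⟨K, hpartial⟩ := exists_integral_derivWithin_mul_sub_rpow_le_of_isMinOn hα0 ht hg hmin
  have hprimitive := continuousOn_primitive_interval' (intervalIntegrable_mul_sub_rpow hα1 ht.le
    (hg.continuousOn_derivWithin (uniqueDiffOn_Icc ht) le_rfl)) left_mem_uIcc t right_mem_uIcc
  rw [uIcc_of_le ht.le] at hprimitive
  have hbound : Tendsto (fun s => K * (t - s) ^ (1 - α)) (𝓝[Ioo t₀ t] t) (𝓝 0) := by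
    have hcont : ContinuousAt (fun s : ℝ => K * (t - s) ^ (1 - α)) t :=
      continuousAt_const.mul ((continuousAt_const.sub continuousAt_id).rpow_const
        (Or.inr (sub_nonneg.2 hα1.le)))
    simpa [Real.zero_rpow (sub_pos.2 hα1).ne'] using
      hcont.tendsto.mono_left (nhdsWithin_le_nhds (s := Ioo t₀ t))
  have := right_nhdsWithin_Ioo_neBot ht
  exact le_of_tendsto_of_tendsto (hprimitive.mono Ioo_subset_Icc_self) hbound
    (eventually_nhdsWithin_of_forall hpartial)

theorem caputoDeriv_sub_const_sq {α t₀ t : ℝ} {u : ℝ → ℝ} (hα : α < 1) (ht : t₀ < t)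
    (hu : ContDiffOn ℝ 1 u (Icc t₀ t)) (c : ℝ) :
    caputoDeriv α t₀ (fun x => (u x - c) ^ 2) t =
      caputoDeriv α t₀ (fun x => u x ^ 2) t - 2 * c * caputoDeriv α t₀ u t := by
  set u' := derivWithin u (Icc t₀ t)
  have hu'c : ContinuousOn u' (Icc t₀ t) :=
    hu.continuousOn_derivWithin (uniqueDiffOn_Icc ht) le_rfl
  have hud : ∀ x ∈ Icc t₀ t, HasDerivWithinAt u (u' x) (Icc t₀ t) x :=
    fun x hx => (hu.differentiableOn one_ne_zero x hx).hasDerivWithinAt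
  have hsq : ∀ x ∈ uIcc t₀ t,
      derivWithin (fun x => u x ^ 2) (Icc t₀ t) x * (t - x) ^ (-α) =
        2 * u x * u' x * (t - x) ^ (-α) := by
    rw [uIcc_of_le ht.le]
    intro x hx
    rw [HasDerivWithinAt.derivWithin (f := fun x => u x ^ 2) ((hud x hx).pow 2)
      (uniqueDiffOn_Icc ht x hx)]
    ring
  have hsub_sq : ∀ x ∈ uIcc t₀ t,
      derivWithin (fun x => (u x - c) ^ 2) (Icc t₀ t) x * (t - x) ^ (-α) =
        2 * u x * u' x * (t - x) ^ (-α) - 2 * c * (u' x * (t - x) ^ (-α)) := by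
    rw [uIcc_of_le ht.le]
    intro x hx
    rw [HasDerivWithinAt.derivWithin (f := fun x => (u x - c) ^ 2) (((hud x hx).sub_const c).pow 2)
      (uniqueDiffOn_Icc ht x hx)]
    ring
  have hint_sq := intervalIntegrable_mul_sub_rpow (φ := fun x => 2 * u x * u' x) hα ht.le
    ((continuousOn_const.mul hu.continuousOn).mul hu'c)
  have hint := (intervalIntegrable_mul_sub_rpow hα ht.le hu'c).const_mul (2 * c)
  simp only [caputoDeriv_eq_integral_derivWithin _ ht.le]
  rw [integral_congr hsq, integral_congr hsub_sq, integral_sub hint_sq hint,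
    intervalIntegral.integral_const_mul]
  ring

/-- For `0 < α < 1` and a continuously differentiable function `u` on `[t₀,∞)`,
the Caputo fractional derivative satisfies
`ᶜD^α_{t₀}(u²)(t) ≤ 2u(t) ᶜD^α_{t₀}u(t)` for all `t ≥ t₀`. -/
theorem caputo_sq_estimate (α t₀ : ℝ) (hα : 0 < α) (hα1 : α < 1)
    (u : ℝ → ℝ) (hu : ContDiffOn ℝ 1 u (Set.Ici t₀)) :
    ∀ t : ℝ, t₀ ≤ t →
      caputoDeriv α t₀ (fun x => u x ^ 2) t ≤ 2 * u t * caputoDeriv α t₀ u t := by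
  intro t ht
  rcases ht.eq_or_lt with rfl | ht
  · simp [caputoDeriv]
  have hut : ContDiffOn ℝ 1 u (Icc t₀ t) := hu.mono Icc_subset_Ici_self
  have hmin : IsMinOn (fun x => (u x - u t) ^ 2) (Icc t₀ t) t :=
    isMinOn_iff.2 fun x _ => by simpa using sq_nonneg (u x - u t)
  have hnonpos := caputoDeriv_nonpos_of_isMinOn hα.le hα1 ht
    ((hut.sub contDiffOn_const).pow 2) hmin
  rw [caputoDeriv_sub_const_sq hα1 ht hut] at hnonpos
  linarith
end

section
/- Let 0 < α < 1, t₀ ∈ ℝ, t ≥ t₀, let u : [t₀, t] → (0,∞) be continuously differentiable, and let g : (0,∞) → ℝ be positive, differentiable, and strictly increasing. Then ∫_{t₀}^{t} u'(x) (1 − g(u(t))/g(u(x))) exp(−(α/(1−α))(t−x)) dx ≤ 0. -/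
/-!
With `c = g (u t)` the weight `ψ v = 1 - c / g v` is `≤ 0` for `v ≤ u t` and `≥ 0` for
`v ≥ u t`, so by substitution every tail integral `∫ₓᵗ u' · (ψ ∘ u) = ∫_{u x}^{u t} ψ` is `≤ 0`.
Multiplying by the kernel, which is nonnegative and increasing, preserves this sign: integration
by parts writes the weighted integral as a combination of tail integrals with the nonnegative
coefficients `K t₀` and `K'`.
-/

open Set MeasureTheory intervalIntegral

theorem integral_mul_nonpos_of_tail_integral_nonpos {f K K' : ℝ → ℝ} {a b : ℝ} (hab : a ≤ b)
    (hf : ContinuousOn f (Icc a b)) (hK : ∀ x ∈ Icc a b, HasDerivAt K (K' x) x)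
    (hK' : ContinuousOn K' (Icc a b)) (hKa : 0 ≤ K a) (hK'_nonneg : ∀ x ∈ Icc a b, 0 ≤ K' x)
    (htail : ∀ x ∈ Icc a b, ∫ s in x..b, f s ≤ 0) :
    ∫ x in a..b, f x * K x ≤ 0 := by
  set Φ : ℝ → ℝ := fun x => ∫ s in x..b, f s
  have hfi : IntegrableOn f (uIcc a b) := by
    rw [uIcc_of_le hab]; exact hf.integrableOn_Icc
  have hΦ_deriv : ∀ x ∈ Ioo (min a b) (max a b), HasDerivAt Φ (-f x) x := by
    rw [min_eq_left hab, max_eq_right hab]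
    intro x hx
    have hsub : uIcc x b ⊆ uIcc a b :=
      uIcc_subset_uIcc_right (uIcc_of_le hab ▸ Ioo_subset_Icc_self hx)
    exact integral_hasDerivAt_left (hfi.mono_set hsub).intervalIntegrable
      ((hf.mono Ioo_subset_Icc_self).stronglyMeasurableAtFilter isOpen_Ioo x hx)
      (hf.continuousAt (Icc_mem_nhds hx.1 hx.2))
  have hibp := integral_mul_deriv_eq_deriv_mul_of_hasDerivAt (u := Φ) (v := K)
    (continuousOn_primitive_interval_left hfi)
    (fun x hx => (hK x (uIcc_of_le hab ▸ hx)).continuousAt.continuousWithinAt) hΦ_deriv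
    (fun x hx => hK x (Ioo_subset_Icc_self (by rwa [min_eq_left hab, max_eq_right hab] at hx)))
    hfi.neg.intervalIntegrable (by rw [← uIcc_of_le hab] at hK'; exact hK'.intervalIntegrable)
  simp only [Φ, integral_same, zero_mul, zero_sub, neg_mul, intervalIntegral.integral_neg,
    sub_neg_eq_add] at hibp
  have hboundary : Φ a * K a ≤ 0 := mul_nonpos_of_nonpos_of_nonneg (htail a ⟨le_rfl, hab⟩) hKa
  have hbulk : 0 ≤ ∫ x in a..b, -(Φ x * K' x) := integral_nonneg hab fun x hx =>
    neg_nonneg.2 (mul_nonpos_of_nonpos_of_nonneg (htail x hx) (hK'_nonneg x hx))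
  rw [intervalIntegral.integral_neg] at hbulk
  linarith

theorem integral_nonpos_of_nonpos_left_of_nonneg_right {ψ : ℝ → ℝ} {y c : ℝ}
    (hle : ∀ v ∈ Icc y c, ψ v ≤ 0) (hge : ∀ v ∈ Icc c y, 0 ≤ ψ v) :
    ∫ v in y..c, ψ v ≤ 0 := by
  rcases le_total y c with h | h
  · have : 0 ≤ ∫ v in y..c, -ψ v := integral_nonneg h fun v hv => neg_nonneg.2 (hle v hv)
    rwa [intervalIntegral.integral_neg, neg_nonneg] at this
  · rw [integral_symm]
    exact neg_nonpos.2 (integral_nonneg h hge)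

theorem integral_derivWithin_mul_comp_eq {u ψ : ℝ → ℝ} {a b x y : ℝ} (hab : a < b)
    (hu : ContDiffOn ℝ 1 u (Icc a b)) (hψ : ContinuousOn ψ (u '' Icc a b))
    (hx : x ∈ Icc a b) (hy : y ∈ Icc a b) :
    ∫ s in x..y, derivWithin u (Icc a b) s * ψ (u s) = ∫ v in u x..u y, ψ v := by
  have hsub : uIcc x y ⊆ Icc a b := uIcc_subset_Icc hx hy
  have hderiv : ∀ s ∈ Ioo (min x y) (max x y),
      HasDerivWithinAt u (derivWithin u (Icc a b) s) (Ioi s) s := by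
    intro s hs
    have hs' : s ∈ Ioo a b :=
      ⟨lt_of_le_of_lt (le_min hx.1 hy.1) hs.1, lt_of_lt_of_le hs.2 (max_le hx.2 hy.2)⟩
    have hnhds : Icc a b ∈ nhds s := Icc_mem_nhds hs'.1 hs'.2
    rw [derivWithin_of_mem_nhds hnhds]
    exact (((hu.differentiableOn one_ne_zero) s
      (Ioo_subset_Icc_self hs')).differentiableAt hnhds).hasDerivAt.hasDerivWithinAt
  have := integral_comp_mul_deriv'' (hu.continuousOn.mono hsub) hderiv
    ((hu.continuousOn_derivWithin (uniqueDiffOn_Icc hab) le_rfl).mono hsub)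
    (hψ.mono (image_mono hsub))
  simpa only [Function.comp_apply, mul_comm] using this

theorem hasDerivAt_exp_neg_mul_sub (k t x : ℝ) :
    HasDerivAt (fun x => Real.exp (-k * (t - x))) (Real.exp (-k * (t - x)) * k) x := by
  simpa using (((hasDerivAt_id x).const_sub t).const_mul (-k)).exp

/-- For `0 < α < 1`, `t ≥ t₀`, `u` positive and continuously differentiable on `[t₀,t]`,
and `g` positive, differentiable and strictly increasing on `(0,∞)`, one has
`∫_{t₀}^{t} u'(x)(1 − g(u(t))/g(u(x))) exp(−(α/(1−α))(t−x)) dx ≤ 0`. -/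
theorem exp_kernel_integral_nonpos (α t₀ t : ℝ) (hα : 0 < α) (hα1 : α < 1) (ht : t₀ ≤ t)
    (u : ℝ → ℝ) (hu_pos : ∀ x ∈ Set.Icc t₀ t, 0 < u x)
    (hu : ContDiffOn ℝ 1 u (Set.Icc t₀ t))
    (g : ℝ → ℝ)
    (hg_pos : ∀ s ∈ Set.Ioi (0 : ℝ), 0 < g s)
    (hg_diff : DifferentiableOn ℝ g (Set.Ioi 0))
    (hg_mono : StrictMonoOn g (Set.Ioi 0)) :
    (∫ x in t₀..t, deriv u x * (1 - g (u t) / g (u x)) *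
        Real.exp (-(α / (1 - α)) * (t - x))) ≤ 0 := by
  rcases ht.eq_or_lt with rfl | hlt
  · simp
  set k := α / (1 - α)
  have hk : 0 ≤ k := div_nonneg hα.le (sub_pos.2 hα1).le
  have hut : 0 < u t := hu_pos t ⟨ht, le_rfl⟩
  have hψ : ContinuousOn (fun v => 1 - g (u t) / g v) (Ioi 0) :=
    continuousOn_const.sub
      (continuousOn_const.div hg_diff.continuousOn fun v hv => (hg_pos v hv).ne')
  have hψu : ContinuousOn (fun v => 1 - g (u t) / g v) (u '' Icc t₀ t) :=
    hψ.mono (image_subset_iff.2 hu_pos)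
  calc (∫ x in t₀..t, deriv u x * (1 - g (u t) / g (u x)) * Real.exp (-k * (t - x)))
      = ∫ x in t₀..t, derivWithin u (Icc t₀ t) x * (1 - g (u t) / g (u x)) *
          Real.exp (-k * (t - x)) :=
        integral_congr_Ioo_of_le ht fun x hx => by
          rw [derivWithin_of_mem_nhds (Icc_mem_nhds hx.1 hx.2)]
    _ ≤ 0 := by
      refine integral_mul_nonpos_of_tail_integral_nonpos ht
        ((hu.continuousOn_derivWithin (uniqueDiffOn_Icc hlt) le_rfl).mul
          (hψu.comp hu.continuousOn (mapsTo_image u _)))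
        (fun x _ => hasDerivAt_exp_neg_mul_sub k t x) (by fun_prop) (Real.exp_pos _).le
        (fun x _ => by positivity) fun x hx => ?_
      rw [integral_derivWithin_mul_comp_eq hlt hu hψu hx ⟨ht, le_rfl⟩]
      refine integral_nonpos_of_nonpos_left_of_nonneg_right (fun v hv => ?_) fun v hv => ?_
      · have hv0 : 0 < v := (hu_pos x hx).trans_le hv.1
        rw [sub_nonpos, one_le_div (hg_pos v hv0)]
        exact hg_mono.monotoneOn hv0 hut hv.2
      · have hv0 : 0 < v := hut.trans_le hv.1
        rw [sub_nonneg, div_le_one (hg_pos v hv0)]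
        exact hg_mono.monotoneOn hut hv0 hv.1
end

section
/- Let F : (0,∞) × (0,∞) → ℝ be continuously differentiable and satisfy hypotheses (H): F(S,I) = I·F₁(S,I) for a continuously differentiable function F₁ with ∂F₁/∂S > 0, ∂F₁/∂I ≤ 0 and F₁ > 0 on (0,∞)×(0,∞), and ∂F/∂I ≥ 0. Then for all S > 0 and all I, I* > 0, with G(x) = x − 1 − ln x, one has G(F(S,I)/F(S,I*)) ≤ G(I/I*). -/
/-- The function `G(x) = x − 1 − ln x`. -/
noncomputable def Gfun (x : ℝ) : ℝ := x - 1 - Real.log x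

/-!
Write `F(S,I) / F(S,I*) = (I / I*) · (F₁(S,I) / F₁(S,I*))`. Monotonicity of `F` in `I`
puts this ratio on the same side of `1` as `I / I*`, and antitonicity of `F₁` in `I` puts it
no farther from `1`. Since `G` is convex with its minimum at `1`, it grows away from `1` on either side.
-/

open Set

/-- Convexity of `G`: it lies above its tangent line at `r`, of slope `G'(r) = 1 - r⁻¹`. -/
lemma Gfun_add_tangent_le {r t : ℝ} (hr : 0 < r) (ht : 0 < t) :
    Gfun r + (t - r) * (1 - r⁻¹) ≤ Gfun t := by
  have hlog : Real.log t - Real.log r ≤ t / r - 1 := by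
    rw [← Real.log_div ht.ne' hr.ne']
    exact Real.log_le_sub_one_of_pos (div_pos ht hr)
  have hslope : (t - r) * (1 - r⁻¹) = t - r - (t / r - 1) := by
    field_simp
  simp only [Gfun]
  linarith

lemma Gfun_monotoneOn : MonotoneOn Gfun (Ici 1) := by
  intro r hr t ht hrt
  have hr0 : 0 < r := one_pos.trans_le hr
  have hslope : 0 ≤ 1 - r⁻¹ := sub_nonneg.2 (inv_le_one_of_one_le₀ hr)
  linarith [Gfun_add_tangent_le hr0 (hr0.trans_le hrt), mul_nonneg (sub_nonneg.2 hrt) hslope]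

lemma Gfun_antitoneOn : AntitoneOn Gfun (Ioc 0 1) := by
  intro t ht r hr htr
  have hslope : 1 - r⁻¹ ≤ 0 := sub_nonpos.2 (one_le_inv₀ hr.1 |>.2 hr.2)
  linarith [Gfun_add_tangent_le hr.1 ht.1, mul_nonneg_of_nonpos_of_nonpos (sub_nonpos.2 htr) hslope]

lemma Gfun_le_of_mem_uIcc {r x : ℝ} (hx : 0 < x) (hr : r ∈ uIcc 1 x) : Gfun r ≤ Gfun x := by
  rcases le_total 1 x with h1x | hx1
  · rw [uIcc_of_le h1x] at hr
    exact Gfun_monotoneOn hr.1 (hr.1.trans hr.2) hr.2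
  · rw [uIcc_of_ge hx1] at hr
    exact Gfun_antitoneOn ⟨hx, hx1⟩ ⟨hx.trans_le hr.1, hr.2⟩ hr.1

lemma mul_div_mul_mem_uIcc {g : ℝ → ℝ} (hpos : ∀ x > 0, 0 < g x)
    (hanti : AntitoneOn g (Ioi 0)) (hmono : MonotoneOn (fun x => x * g x) (Ioi 0))
    {I J : ℝ} (hI : 0 < I) (hJ : 0 < J) :
    I * g I / (J * g J) ∈ uIcc 1 (I / J) := by
  have hsplit : I * g I / (J * g J) = I / J * (g I / g J) := mul_div_mul_comm _ _ _ _
  have hgI := hpos I hI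
  have hgJ := hpos J hJ
  have hden : 0 < J * g J := mul_pos hJ hgJ
  rcases le_total J I with hJI | hIJ
  · rw [uIcc_of_le ((one_le_div hJ).2 hJI)]
    refine ⟨(one_le_div hden).2 (hmono hJ hI hJI), ?_⟩
    rw [hsplit]
    exact mul_le_of_le_one_right (div_pos hI hJ).le ((div_le_one hgJ).2 (hanti hJ hI hJI))
  · rw [uIcc_of_ge ((div_le_one hJ).2 hIJ)]
    refine ⟨?_, (div_le_one hden).2 (hmono hI hJ hIJ)⟩
    rw [hsplit]
    exact le_mul_of_one_le_right (div_pos hI hJ).le ((one_le_div hgJ).2 (hanti hI hJ hIJ))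

theorem G_incidence_estimate_general (F₁ : ℝ → ℝ → ℝ)
    (hF₁ : ContDiffOn ℝ 1 (fun p : ℝ × ℝ => F₁ p.1 p.2) (Set.Ioi 0 ×ˢ Set.Ioi 0))
    (hF₁_pos : ∀ S > (0 : ℝ), ∀ I > (0 : ℝ), 0 < F₁ S I)
    (hF₁_I : ∀ S > (0 : ℝ), ∀ I > (0 : ℝ), deriv (fun i => F₁ S i) I ≤ 0)
    (hF_I : ∀ S > (0 : ℝ), ∀ I > (0 : ℝ), 0 ≤ deriv (fun i => i * F₁ S i) I) :
    ∀ S > (0 : ℝ), ∀ I > (0 : ℝ), ∀ Istar > (0 : ℝ),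
      Gfun ((I * F₁ S I) / (Istar * F₁ S Istar)) ≤ Gfun (I / Istar) := by
  intro S hS I hI Istar hIstar
  have hdiff : DifferentiableOn ℝ (F₁ S) (Ioi 0) :=
    (hF₁.differentiableOn one_ne_zero).comp
      ((differentiableOn_const S).prodMk differentiableOn_id) fun i hi => ⟨hS, hi⟩
  have hanti : AntitoneOn (F₁ S) (Ioi 0) :=
    antitoneOn_of_deriv_nonpos (convex_Ioi 0) hdiff.continuousOn
      (hdiff.mono interior_subset) fun x hx => hF₁_I S hS x (interior_subset hx)
  have hdiff_mul : DifferentiableOn ℝ (fun i => i * F₁ S i) (Ioi 0) :=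
    differentiableOn_id.mul hdiff
  have hmono : MonotoneOn (fun i => i * F₁ S i) (Ioi 0) :=
    monotoneOn_of_deriv_nonneg (convex_Ioi 0) hdiff_mul.continuousOn
      (hdiff_mul.mono interior_subset) fun x hx => hF_I S hS x (interior_subset hx)
  exact Gfun_le_of_mem_uIcc (div_pos hI hIstar)
    (mul_div_mul_mem_uIcc (hF₁_pos S hS) hanti hmono hI hIstar)

/-- Let `F(S,I) = I·F₁(S,I)` satisfy hypotheses (H): `F₁` is continuously differentiable
and positive on `(0,∞)×(0,∞)`, strictly increasing in `S`, nonincreasing in `I`, and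
`F` is nondecreasing in `I`. Then for all `S > 0` and `I, I* > 0`,
`G(F(S,I)/F(S,I*)) ≤ G(I/I*)` where `G(x) = x − 1 − ln x`. -/
theorem G_incidence_estimate (F₁ : ℝ → ℝ → ℝ)
    (hF₁ : ContDiffOn ℝ 1 (fun p : ℝ × ℝ => F₁ p.1 p.2) (Set.Ioi 0 ×ˢ Set.Ioi 0))
    (hF₁_pos : ∀ S > (0 : ℝ), ∀ I > (0 : ℝ), 0 < F₁ S I)
    (hF₁_S : ∀ S > (0 : ℝ), ∀ I > (0 : ℝ), 0 < deriv (fun s => F₁ s I) S)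
    (hF₁_I : ∀ S > (0 : ℝ), ∀ I > (0 : ℝ), deriv (fun i => F₁ S i) I ≤ 0)
    (hF_I : ∀ S > (0 : ℝ), ∀ I > (0 : ℝ), 0 ≤ deriv (fun i => i * F₁ S i) I) :
    ∀ S > (0 : ℝ), ∀ I > (0 : ℝ), ∀ Istar > (0 : ℝ),
      Gfun ((I * F₁ S I) / (Istar * F₁ S Istar)) ≤ Gfun (I / Istar) :=
  G_incidence_estimate_general F₁ hF₁ hF₁_pos hF₁_I hF_I
end
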